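/- arXiv:1808.04297 — 4 statements merged into one kernel-verified Lean document; each statement's English description precedes it below -/
import Mathlib

section
/- Let 𝒯 be a Krull–Schmidt, Hom-finite triangulated category over an algebraically closed field k with suspension functor [1], R a basic rigid object of 𝒯, and let R₁ →f R₀ →g X → R₁[1] be a triangle in 𝒯 with R₀, R₁ ∈ add R. Then X is R[1]-rigid if and only if the induced map Hom_𝒯(f, X) : Hom_𝒯(R₀, X) → Hom_𝒯(R₁, X) is surjective. -/
/-!
Formalization of results from "Relative rigid objects in triangulated categories"
by Fu–Geng–Liu.  Throughout, `C` is a Krull–Schmidt, Hom-finite, `k`-linear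
triangulated category over an algebraically closed field `k` (Krull–Schmidt is
encoded as: Hom-finite over `k` together with idempotent completeness), with
suspension functor `⟦1⟧`.
-/

open CategoryTheory Limits Pretriangulated Opposite

universe w v u

namespace RelRigid

variable {k : Type w} [Field k] [IsAlgClosed k]
variable {C : Type u} [Category.{v} C] [Preadditive C] [CategoryTheory.Linear k C]
  [HasZeroObject C] [HasShift C ℤ] [∀ n : ℤ, (shiftFunctor C n).Additive]
  [Pretriangulated C] [HasFiniteBiproducts C] [IsIdempotentComplete C]
  [∀ X Y : C, Module.Finite k (X ⟶ Y)]

/-- `X` belongs to `add R`: it is a direct summand of a finite direct sum of copies of `R`. -/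
def InAdd (R X : C) : Prop :=
  ∃ (n : ℕ) (s : X ⟶ ⨁ (fun _ : Fin n => R)) (p : (⨁ (fun _ : Fin n => R)) ⟶ X),
    s ≫ p = 𝟙 X

/-- `Y` is a direct summand of `X`. -/
def IsSummand (Y X : C) : Prop := ∃ (s : Y ⟶ X) (p : X ⟶ Y), s ≫ p = 𝟙 Y

/-- The morphism `f` factors through `add Z`. -/
def FactorsThroughAdd (Z : C) {X Y : C} (f : X ⟶ Y) : Prop :=
  ∃ (Z' : C) (_ : InAdd Z Z') (g : X ⟶ Z') (h : Z' ⟶ Y), g ≫ h = f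

/-- `X` is rigid: `Hom(X, X[1]) = 0`. -/
def IsRigidObj (X : C) : Prop := ∀ f : X ⟶ X⟦(1 : ℤ)⟧, f = 0

/-- `X` is `R[1]`-rigid: `R[1](X, X[1]) = 0`, i.e. every morphism `X ⟶ X[1]`
factoring through `add (R[1])` vanishes. -/
def IsRelRigid (R X : C) : Prop :=
  ∀ f : X ⟶ X⟦(1 : ℤ)⟧, FactorsThroughAdd (R⟦(1 : ℤ)⟧) f → f = 0

/-- `X ∈ pr(R)`: there is a triangle `R₁ ⟶ R₀ ⟶ X ⟶ R₁[1]` with `R₀, R₁ ∈ add R`. -/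
def InPr (R X : C) : Prop :=
  ∃ (R₁ R₀ : C) (_ : InAdd R R₁) (_ : InAdd R R₀) (f : R₁ ⟶ R₀) (g : R₀ ⟶ X)
    (h : X ⟶ R₁⟦(1 : ℤ)⟧), Triangle.mk f g h ∈ distTriang C

/-- `X` is maximal `R[1]`-rigid with respect to `pr(R)`: `X ∈ pr(R)` is `R[1]`-rigid and
any `Z ∈ pr(R)` with `R[1](X ⊕ Z, (X ⊕ Z)[1]) = 0` satisfies `Z ∈ add X`. -/
def IsMaxRelRigid (R X : C) : Prop :=
  InPr R X ∧ IsRelRigid R X ∧ ∀ Z : C, InPr R Z → IsRelRigid R (X ⊞ Z) → InAdd X Z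

/-- `X` is indecomposable. -/
def Indecomp (X : C) : Prop :=
  ¬ IsZero X ∧ ∀ A B : C, Nonempty (X ≅ A ⊞ B) → IsZero A ∨ IsZero B

/-- `f` is a decomposition of `X` into indecomposable objects. -/
def IsDecomp (X : C) {n : ℕ} (f : Fin n → C) : Prop :=
  (∀ i, Indecomp (f i)) ∧ Nonempty (X ≅ ⨁ f)

/-- `|X| = n`: `X` has exactly `n` pairwise non-isomorphic indecomposable direct summands. -/
def NumIndec (X : C) (n : ℕ) : Prop :=
  ∃ g : Fin n → C, (∀ i, Indecomp (g i)) ∧ (∀ i j : Fin n, Nonempty (g i ≅ g j) → i = j) ∧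
    ∀ Y : C, Indecomp Y → (IsSummand Y X ↔ ∃ i : Fin n, Nonempty (Y ≅ g i))

/-- `X` is basic: it decomposes into pairwise non-isomorphic indecomposable objects. -/
def IsBasic (X : C) : Prop :=
  ∃ (n : ℕ) (f : Fin n → C), IsDecomp X f ∧ ∀ i j : Fin n, Nonempty (f i ≅ f j) → i = j

/-- `Hom(R, Y)` is a left module over `End (op R)` (equivalently, a right module over the
endomorphism algebra `Γ = End R`), via precomposition. -/
instance homModule (R Y : C) : Module (End (op R)) (R ⟶ Y) where
  smul g f := g.unop ≫ f
  one_smul f := by show (1 : End (op R)).unop ≫ f = f; simp [End.one_def]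
  mul_smul g h f := by
    show (g * h).unop ≫ f = g.unop ≫ h.unop ≫ f
    simp [End.mul_def]
  smul_zero g := by show g.unop ≫ (0 : _ ⟶ _) = 0; simp
  smul_add g f₁ f₂ := by
    show g.unop ≫ (f₁ + f₂) = g.unop ≫ f₁ + g.unop ≫ f₂
    simp
  add_smul g h f := by
    show (g + h).unop ≫ f = g.unop ≫ f + h.unop ≫ f
    rw [show (g + h).unop = g.unop + h.unop from rfl, Preadditive.add_comp]
  zero_smul f := by show (0 : End (op R)).unop ≫ f = 0; simp

/-- Postcomposition `Hom(R, X) → Hom(R, Y)` with `φ : X ⟶ Y`, i.e. the action of the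
functor `Hom(R, −)` on morphisms; it is linear over `End (op R)`. -/
def homMap (R : C) {X Y : C} (φ : X ⟶ Y) : (R ⟶ X) →ₗ[End (op R)] (R ⟶ Y) where
  toFun u := u ≫ φ
  map_add' u v := by simp [Preadditive.add_comp]
  map_smul' g u := by
    show (g.unop ≫ u) ≫ φ = g.unop ≫ (u ≫ φ)
    simp [Category.assoc]

/-- `T` is a cluster tilting object:
`add T = {X : Hom(T, X[1]) = 0} = {X : Hom(X, T[1]) = 0}`. -/
def IsClusterTilting (T : C) : Prop :=
  (∀ X : C, InAdd T X ↔ ∀ f : T ⟶ X⟦(1 : ℤ)⟧, f = 0) ∧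
  (∀ X : C, InAdd T X ↔ ∀ f : X ⟶ T⟦(1 : ℤ)⟧, f = 0)

/-- `T` is maximal `R[1]`-rigid with respect to the whole category `C`. -/
def IsMaxRelRigidAll (R T : C) : Prop :=
  IsRelRigid R T ∧ ∀ Z : C, IsRelRigid R (T ⊞ Z) → InAdd T Z

/-- `T` is `R[1]`-cluster tilting: `T` is `R[1]`-rigid and `|T| = |R|`. -/
def IsRelClusterTilting (R T : C) : Prop :=
  IsRelRigid R T ∧ ∃ n : ℕ, NumIndec T n ∧ NumIndec R n

/-- `S` is presilting: `Hom(S, S[i]) = 0` for all `i > 0`. -/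
def IsPresilting (S : C) : Prop := ∀ i : ℤ, 0 < i → ∀ f : S ⟶ S⟦i⟧, f = 0

/-- A predicate on objects defines a thick subcategory: closed under isomorphisms,
shifts, extensions (cones) and direct summands. -/
def IsThickClosed (P : C → Prop) : Prop :=
  (∀ X Y : C, (X ≅ Y) → P X → P Y) ∧
  (∀ (X : C) (n : ℤ), P X → P (X⟦n⟧)) ∧
  (∀ T : Triangle C, T ∈ (distTriang C) → P T.obj₁ → P T.obj₂ → P T.obj₃) ∧
  (∀ X Y : C, IsSummand Y X → P X → P Y)

/-- The smallest thick subcategory of `C` containing `S` is `C` itself. -/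
def ThickGenerates (S : C) : Prop :=
  ∀ P : C → Prop, IsThickClosed P → P S → ∀ X : C, P X

/-- `S` is silting: presilting and `thick S = C`. -/
def IsSilting (S : C) : Prop := IsPresilting S ∧ ThickGenerates S

/-- `C` is `n`-Calabi–Yau: there are bifunctorial isomorphisms
`Hom(X, Y) ≅ D Hom(Y, X[n])`, encoded by a perfect pairing
`Hom(X, Y) × Hom(Y, X[n]) → k` which is natural in both variables. -/
def IsCalabiYau (n : ℤ) : Prop :=
  ∃ pair : ∀ X Y : C, (X ⟶ Y) →ₗ[k] ((Y ⟶ X⟦n⟧) →ₗ[k] k),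
    (∀ X Y : C, Function.Bijective (pair X Y)) ∧
    (∀ (X' X Y : C) (u : X' ⟶ X) (f : X ⟶ Y) (g : Y ⟶ X'⟦n⟧),
      pair X' Y (u ≫ f) g = pair X Y f (g ≫ (shiftFunctor C n).map u)) ∧
    (∀ (X Y Y' : C) (v : Y ⟶ Y') (f : X ⟶ Y) (g : Y' ⟶ X⟦n⟧),
      pair X Y' (f ≫ v) g = pair X Y f (v ≫ g))

/-- `T` is `d`-rigid: `Hom(T, T[i]) = 0` for `i = 1, …, d`. -/
def IsDRigid (d : ℤ) (T : C) : Prop := ∀ i : ℤ, 1 ≤ i → i ≤ d → ∀ f : T ⟶ T⟦i⟧, f = 0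

/-- `T` is maximal `d`-rigid. -/
def IsMaxDRigid (d : ℤ) (T : C) : Prop :=
  IsDRigid d T ∧ ∀ Z : C, IsDRigid d (T ⊞ Z) → InAdd T Z

/-- `T` is a `d`-cluster tilting object. -/
def IsDClusterTilting (d : ℤ) (T : C) : Prop :=
  IsDRigid d T ∧
  ∀ X : C, (∀ i : ℤ, 1 ≤ i → i ≤ d → ∀ f : T ⟶ X⟦i⟧, f = 0) → InAdd T X

/-- `X` is a maximal rigid object. -/
def IsMaxRigidObj (X : C) : Prop :=
  IsRigidObj X ∧ ∀ Z : C, IsRigidObj (X ⊞ Z) → InAdd X Z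

/-- The isomorphism setoid on objects of `C` satisfying a predicate `p`. -/
def objSetoid (p : C → Prop) : Setoid {X : C // p X} where
  r X Y := Nonempty (X.1 ≅ Y.1)
  iseqv := ⟨fun _ => ⟨Iso.refl _⟩, fun ⟨e⟩ => ⟨e.symm⟩, fun ⟨e⟩ ⟨f⟩ => ⟨e.trans f⟩⟩

section Modules

variable (Γ : Type w) [Ring Γ]

/-- `f, g` is a minimal projective presentation `P₁ → P₀ → M → 0`:
both `P`s are projective, the sequence is exact with `g` surjective, and the kernels of
`g` and `f` are superfluous submodules (which encodes minimality). -/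
def IsMinProjPres {P₁ P₀ M : Type w} [AddCommGroup P₁] [Module Γ P₁]
    [AddCommGroup P₀] [Module Γ P₀] [AddCommGroup M] [Module Γ M]
    (f : P₁ →ₗ[Γ] P₀) (g : P₀ →ₗ[Γ] M) : Prop :=
  Module.Projective Γ P₁ ∧ Module.Projective Γ P₀ ∧
  Function.Surjective g ∧ Function.Exact f g ∧
  (∀ K : Submodule Γ P₀, LinearMap.ker g ⊔ K = ⊤ → K = ⊤) ∧
  (∀ K : Submodule Γ P₁, LinearMap.ker f ⊔ K = ⊤ → K = ⊤)

/-- `M` is `τ`-rigid, via the Adachi–Iyama–Reiten criterion: for a minimal projective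
presentation `P₁ →f P₀ → M → 0`, the map `Hom(f, M) : Hom(P₀, M) → Hom(P₁, M)` is
surjective. -/
def IsTauRigid (M : Type w) [AddCommGroup M] [Module Γ M] : Prop :=
  ∀ (P₁ P₀ : Type w) [AddCommGroup P₁] [Module Γ P₁] [AddCommGroup P₀] [Module Γ P₀],
    ∀ (f : P₁ →ₗ[Γ] P₀) (g : P₀ →ₗ[Γ] M), IsMinProjPres Γ f g →
    Function.Surjective (fun h : P₀ →ₗ[Γ] M => h ∘ₗ f)

/-- `(M, P)` is a `τ`-rigid pair: `M ∈ mod Γ` is `τ`-rigid, `P` is finitely generated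
projective and `Hom(P, M) = 0`. -/
def IsTauRigidPair (M P : Type w) [AddCommGroup M] [Module Γ M]
    [AddCommGroup P] [Module Γ P] : Prop :=
  Module.Finite Γ M ∧ IsTauRigid Γ M ∧
  Module.Finite Γ P ∧ Module.Projective Γ P ∧ ∀ h : P →ₗ[Γ] M, h = 0

/-- A module is indecomposable. -/
def ModIndec (M : Type w) [AddCommGroup M] [Module Γ M] : Prop :=
  Nontrivial M ∧ ∀ A B : Submodule Γ M, IsCompl A B → A = ⊥ ∨ B = ⊥

/-- An internal decomposition into indecomposable submodules. -/
def IsModDecomp {M : Type w} [AddCommGroup M] [Module Γ M] {n : ℕ}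
    (f : Fin n → Submodule Γ M) : Prop :=
  DirectSum.IsInternal f ∧ ∀ i, ModIndec Γ (f i)

/-- `|M| = n`: `M` has exactly `n` non-isomorphic indecomposable direct summands. -/
def NumIndecMod (M : Type w) [AddCommGroup M] [Module Γ M] (n : ℕ) : Prop :=
  ∃ (m : ℕ) (f : Fin m → Submodule Γ M) (g : Fin n → Submodule Γ M),
    IsModDecomp Γ f ∧ (∀ i, ModIndec Γ (g i)) ∧
    (∀ i j : Fin n, Nonempty (g i ≃ₗ[Γ] g j) → i = j) ∧
    (∀ i : Fin m, ∃ j : Fin n, Nonempty (f i ≃ₗ[Γ] g j)) ∧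
    (∀ j : Fin n, ∃ i : Fin m, Nonempty (f i ≃ₗ[Γ] g j))

/-- `M` is basic: it decomposes into pairwise non-isomorphic indecomposable submodules. -/
def ModBasic (M : Type w) [AddCommGroup M] [Module Γ M] : Prop :=
  ∃ (n : ℕ) (f : Fin n → Submodule Γ M), IsModDecomp Γ f ∧
    ∀ i j : Fin n, Nonempty (f i ≃ₗ[Γ] f j) → i = j

/-- `(M, P)` is a support `τ`-tilting pair: a `τ`-rigid pair with `|M| + |P| = |Γ|`. -/
def IsSuppTauTiltingPair (M P : Type w) [AddCommGroup M] [Module Γ M]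
    [AddCommGroup P] [Module Γ P] : Prop :=
  IsTauRigidPair Γ M P ∧
  ∃ nM nP nΓ : ℕ, NumIndecMod Γ M nM ∧ NumIndecMod Γ P nP ∧ NumIndecMod Γ Γ nΓ ∧
    nM + nP = nΓ

/-- `M` is a support `τ`-tilting module. -/
def IsSuppTauTilting (M : Type w) [AddCommGroup M] [Module Γ M] : Prop :=
  ∃ P : ModuleCat.{w} Γ, ModBasic Γ P ∧ IsSuppTauTiltingPair Γ M P

/-- `M` has projective dimension at most `1`. -/
def PdLeOne (M : Type w) [AddCommGroup M] [Module Γ M] : Prop :=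
  ∃ (P₁ P₀ : ModuleCat.{w} Γ) (f : P₁ →ₗ[Γ] P₀) (g : ↥P₀ →ₗ[Γ] M),
    Module.Projective Γ P₁ ∧ Module.Projective Γ P₀ ∧
    Function.Injective f ∧ Function.Surjective g ∧ Function.Exact f g

/-- `Ext¹_Γ(M, M) = 0`: every self-extension of `M` splits. -/
def SelfExtSplit (M : Type w) [AddCommGroup M] [Module Γ M] : Prop :=
  ∀ (E : ModuleCat.{w} Γ) (i : M →ₗ[Γ] E) (p : ↥E →ₗ[Γ] M),
    Function.Injective i → Function.Surjective p → Function.Exact i p →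
    ∃ r : ↥E →ₗ[Γ] M, r ∘ₗ i = LinearMap.id

/-- `M` is a (basic) tilting module: `M ∈ mod Γ` is basic with `pd M ≤ 1`,
`Ext¹(M, M) = 0` and `|M| = |Γ|`. -/
def IsTiltingMod (M : Type w) [AddCommGroup M] [Module Γ M] : Prop :=
  Module.Finite Γ M ∧ ModBasic Γ M ∧ PdLeOne Γ M ∧ SelfExtSplit Γ M ∧
  ∃ n : ℕ, NumIndecMod Γ M n ∧ NumIndecMod Γ Γ n

/-- The linear-isomorphism setoid on modules satisfying a predicate `p`. -/
def modSetoid (p : ModuleCat.{w} Γ → Prop) : Setoid {M : ModuleCat.{w} Γ // p M} where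
  r M N := Nonempty (↥M.1 ≃ₗ[Γ] ↥N.1)
  iseqv := ⟨fun _ => ⟨LinearEquiv.refl Γ _⟩, fun ⟨e⟩ => ⟨e.symm⟩, fun ⟨e⟩ ⟨f⟩ => ⟨e.trans f⟩⟩

/-- The componentwise linear-isomorphism setoid on pairs of modules satisfying `p`. -/
def pairSetoid (p : ModuleCat.{w} Γ × ModuleCat.{w} Γ → Prop) :
    Setoid {Mp : ModuleCat.{w} Γ × ModuleCat.{w} Γ // p Mp} where
  r A B := Nonempty (↥A.1.1 ≃ₗ[Γ] ↥B.1.1) ∧ Nonempty (↥A.1.2 ≃ₗ[Γ] ↥B.1.2)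
  iseqv := ⟨fun _ => ⟨⟨LinearEquiv.refl Γ _⟩, ⟨LinearEquiv.refl Γ _⟩⟩,
    fun ⟨⟨e⟩, ⟨f⟩⟩ => ⟨⟨e.symm⟩, ⟨f.symm⟩⟩,
    fun ⟨⟨e⟩, ⟨f⟩⟩ ⟨⟨e'⟩, ⟨f'⟩⟩ => ⟨⟨e.trans e'⟩, ⟨f.trans f'⟩⟩⟩

/-- `(M, P)` is a basic `τ`-rigid pair. -/
def BasicTauRigidPair (Mp : ModuleCat.{w} Γ × ModuleCat.{w} Γ) : Prop :=
  IsTauRigidPair Γ ↥Mp.1 ↥Mp.2 ∧ ModBasic Γ ↥Mp.1 ∧ ModBasic Γ ↥Mp.2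

end Modules

/-!
Write `T : R₁ →f R₀ →g X →h R₁[1]`. The morphisms `X ⟶ X[1]` factoring through `add R[1]`
are exactly the composites `h ≫ u[1]` with `u : R₁ ⟶ X`: such a composite factors through
`R₁[1]`, and conversely, rigidity of `R` makes any `X ⟶ Z' ⟶ X[1]` with `Z' ∈ add R[1]`
factor through `h` on the left and through `g[1]` on the right, hence through
`h ≫ (ζ ≫ g)[1]` for some `ζ : R₁ ⟶ R₀`. Since `T` is distinguished, `h ≫ u[1] = 0` holds
exactly when `u` factors through `f`.
-/

section

variable {D : Type*} [Category D] [Preadditive D]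

lemma InAdd.hom_eq_zero [HasFiniteBiproducts D] {R R' A B : D}
    (hRR' : ∀ v : R ⟶ R', v = 0) (hA : InAdd R A) (hB : InAdd R' B) (u : A ⟶ B) : u = 0 := by
  obtain ⟨n, s, p, hsp⟩ := hA
  obtain ⟨m, s', p', hsp'⟩ := hB
  have hpus : p ≫ u ≫ s' = 0 := by
    ext i j
    simpa using hRR' (biproduct.ι (fun _ : Fin n => R) j ≫ (p ≫ u ≫ s') ≫
      biproduct.π (fun _ : Fin m => R') i)
  calc u = s ≫ (p ≫ u ≫ s') ≫ p' := by
        simp only [Category.assoc, hsp', Category.comp_id, reassoc_of% hsp]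
    _ = 0 := by rw [hpus, zero_comp, comp_zero]

variable [HasShift D ℤ]

lemma IsRigidObj.shift {R : D} (hR : IsRigidObj R) (n : ℤ) : IsRigidObj (R⟦n⟧) := by
  intro u
  obtain ⟨v, hv⟩ := (shiftFunctor D n).map_surjective
    (u ≫ (shiftFunctorComm D 1 n).inv.app R)
  rw [← cancel_mono ((shiftFunctorComm D 1 n).inv.app R), ← hv, hR v, Functor.map_zero,
    zero_comp]

variable [∀ n : ℤ, (shiftFunctor D n).Additive]

lemma InAdd.shift [HasFiniteBiproducts D] {R A : D} (hA : InAdd R A) (n : ℤ) :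
    InAdd (R⟦n⟧) (A⟦n⟧) := by
  obtain ⟨m, s, p, hsp⟩ := hA
  let e := (shiftFunctor D n).mapBiproduct (fun _ : Fin m => R)
  refine ⟨m, s⟦n⟧' ≫ e.hom, e.inv ≫ p⟦n⟧', ?_⟩
  simp only [Category.assoc, e.hom_inv_id_assoc, ← Functor.map_comp, hsp,
    (shiftFunctor D n).map_id]

variable [HasZeroObject D] [Pretriangulated D]

lemma _root_.CategoryTheory.Pretriangulated.Triangle.mor₃_comp_shift_map_eq_zero_iff
    {T : Triangle D} (hT : T ∈ distTriang D) {Y : D} (u : T.obj₁ ⟶ Y) :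
    T.mor₃ ≫ u⟦(1 : ℤ)⟧' = 0 ↔ ∃ v : T.obj₂ ⟶ Y, T.mor₁ ≫ v = u := by
  constructor
  · intro hu
    obtain ⟨w, hw⟩ := Triangle.yoneda_exact₃ _ (rot_of_distTriang _ hT) _ hu
    obtain ⟨v, rfl⟩ := (shiftFunctor D (1 : ℤ)).map_surjective (X := T.obj₂) w
    refine ⟨-v, (shiftFunctor D (1 : ℤ)).map_injective ?_⟩
    rw [Functor.map_comp, Functor.map_neg, Preadditive.comp_neg, ← Preadditive.neg_comp]
    exact hw.symm
  · rintro ⟨v, rfl⟩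
    rw [Functor.map_comp, comp_distTriang_mor_zero₃₁_assoc _ hT, zero_comp]

variable [HasFiniteBiproducts D]

lemma factorsThroughAdd_shift_iff {R R₁ R₀ X : D} (hR : IsRigidObj R) (hR₁ : InAdd R R₁)
    (hR₀ : InAdd R R₀) {f : R₁ ⟶ R₀} {g : R₀ ⟶ X} {h : X ⟶ R₁⟦(1 : ℤ)⟧}
    (hT : Triangle.mk f g h ∈ distTriang D) (φ : X ⟶ X⟦(1 : ℤ)⟧) :
    FactorsThroughAdd (R⟦(1 : ℤ)⟧) φ ↔ ∃ u : R₁ ⟶ X, h ≫ u⟦(1 : ℤ)⟧' = φ := by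
  constructor
  · rintro ⟨Z', hZ', a, b, rfl⟩
    obtain ⟨(a₁ : R₁⟦(1 : ℤ)⟧ ⟶ Z'), ha : a = h ≫ a₁⟩ :=
      Triangle.yoneda_exact₃ _ hT a (InAdd.hom_eq_zero hR hR₀ hZ' _)
    obtain ⟨(b₁ : Z' ⟶ R₀⟦(1 : ℤ)⟧), hb : b = b₁ ≫ (-g⟦(1 : ℤ)⟧')⟩ :=
      Triangle.coyoneda_exact₁ _ (rot_of_distTriang _ (rot_of_distTriang _ hT)) b
        (InAdd.hom_eq_zero (hR.shift 1) hZ' ((hR₁.shift 1).shift 1) _)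
    obtain ⟨ζ, hζ⟩ := (shiftFunctor D (1 : ℤ)).map_surjective (X := R₁) (Y := R₀) (a₁ ≫ b₁)
    refine ⟨-(ζ ≫ g), ?_⟩
    rw [ha, hb, Functor.map_neg, Functor.map_comp, hζ]
    simp only [Category.assoc, Preadditive.comp_neg]
  · rintro ⟨u, rfl⟩
    exact ⟨R₁⟦(1 : ℤ)⟧, hR₁.shift 1, h, u⟦(1 : ℤ)⟧', rfl⟩

lemma isRelRigid_iff_forall_comp_shift_map_eq_zero {R R₁ R₀ X : D} (hR : IsRigidObj R)
    (hR₁ : InAdd R R₁) (hR₀ : InAdd R R₀) {f : R₁ ⟶ R₀} {g : R₀ ⟶ X} {h : X ⟶ R₁⟦(1 : ℤ)⟧}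
    (hT : Triangle.mk f g h ∈ distTriang D) :
    IsRelRigid R X ↔ ∀ u : R₁ ⟶ X, h ≫ u⟦(1 : ℤ)⟧' = 0 := by
  simp only [IsRelRigid, factorsThroughAdd_shift_iff hR hR₁ hR₀ hT]
  exact ⟨fun H u => H _ ⟨u, rfl⟩, fun H φ ⟨u, hu⟩ => hu ▸ H u⟩

end

theorem statement0_general (R : C) (hRrigid : IsRigidObj R)
    (R₁ R₀ X : C) (hR₁ : InAdd R R₁) (hR₀ : InAdd R R₀)
    (f : R₁ ⟶ R₀) (g : R₀ ⟶ X) (h : X ⟶ R₁⟦(1 : ℤ)⟧)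
    (hT : Triangle.mk f g h ∈ distTriang C) :
    IsRelRigid R X ↔ Function.Surjective (fun φ : R₀ ⟶ X => f ≫ φ) := by
  rw [isRelRigid_iff_forall_comp_shift_map_eq_zero hRrigid hR₁ hR₀ hT]
  exact forall_congr' fun u => Triangle.mor₃_comp_shift_map_eq_zero_iff hT u

/-- **Lemma 2.2.**  Let `R` be a basic rigid object and
`R₁ →f R₀ →g X →h R₁[1]` a triangle with `R₀, R₁ ∈ add R`.  Then `X` is `R[1]`-rigid
if and only if `Hom(f, X) : Hom(R₀, X) → Hom(R₁, X)` is surjective. -/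
theorem statement0 (R : C) (hRbasic : IsBasic R) (hRrigid : IsRigidObj R)
    (R₁ R₀ X : C) (hR₁ : InAdd R R₁) (hR₀ : InAdd R R₀)
    (f : R₁ ⟶ R₀) (g : R₀ ⟶ X) (h : X ⟶ R₁⟦(1 : ℤ)⟧)
    (hT : Triangle.mk f g h ∈ distTriang C) :
    IsRelRigid R X ↔ Function.Surjective (fun φ : R₀ ⟶ X => f ≫ φ) :=
  statement0_general R hRrigid R₁ R₀ X hR₁ hR₀ f g h hT

end RelRigid
end

section
/- Let 𝒯 be a Krull–Schmidt, Hom-finite triangulated category over an algebraically closed field k, R a basic rigid object of 𝒯 with endomorphism algebra Γ = End_𝒯(R). For any R' ∈ add R and any Z ∈ pr(R), the natural map gives an isomorphism Hom_Γ(Hom_𝒯(R, R'), Hom_𝒯(R, Z)) ≅ Hom_𝒯(R', Z), where Hom_𝒯(R, −) is regarded as taking values in right Γ-modules. -/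
/-!
Formalization of results from "Relative rigid objects in triangulated categories"
by Fu–Geng–Liu.  Throughout, `C` is a Krull–Schmidt, Hom-finite, `k`-linear
triangulated category over an algebraically closed field `k` (Krull–Schmidt is
encoded as: Hom-finite over `k` together with idempotent completeness), with
suspension functor `⟦1⟧`.
-/

open CategoryTheory Limits Pretriangulated Opposite

universe w v u

namespace RelRigid

variable {k : Type w} [Field k] [IsAlgClosed k]
variable {C : Type u} [Category.{v} C] [Preadditive C] [CategoryTheory.Linear k C]
  [HasZeroObject C] [HasShift C ℤ] [∀ n : ℤ, (shiftFunctor C n).Additive]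
  [Pretriangulated C] [HasFiniteBiproducts C] [IsIdempotentComplete C]
  [∀ X Y : C, Module.Finite k (X ⟶ Y)]

/-- **Lemma 2.3.**  Let `R` be a basic rigid object, `Γ = End R`.  For `R' ∈ add R`
and `Z ∈ pr(R)`, the natural map `φ ↦ Hom(R, φ)` gives an isomorphism
`Hom_Γ(Hom(R, R'), Hom(R, Z)) ≅ Hom(R', Z)`. -/
theorem statement1 (R : C) (hRbasic : IsBasic R) (hRrigid : IsRigidObj R)
    (R' Z : C) (hR' : InAdd R R') (hZ : InPr R Z) :
    Function.Bijective (fun φ : R' ⟶ Z => homMap R φ) := by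
  obtain ⟨n, s, p, hsp⟩ := hR'
  constructor
  · intro φ₁ φ₂ h
    have h' : ∀ u : R ⟶ R', u ≫ φ₁ = u ≫ φ₂ := fun u =>
      congrArg (fun F : (R ⟶ R') →ₗ[End (op R)] (R ⟶ Z) => F u) h
    have hp : p ≫ φ₁ = p ≫ φ₂ := by
      apply biproduct.hom_ext'
      intro i
      simpa using h' (biproduct.ι (fun _ : Fin n => R) i ≫ p)
    calc φ₁ = s ≫ p ≫ φ₁ := by rw [← Category.assoc, hsp, Category.id_comp]
      _ = s ≫ p ≫ φ₂ := by rw [hp]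
      _ = φ₂ := by rw [← Category.assoc, hsp, Category.id_comp]
  · intro F
    refine ⟨s ≫ biproduct.desc (fun i => F (biproduct.ι (fun _ : Fin n => R) i ≫ p)), ?_⟩
    have smulF : ∀ (x : R ⟶ R) (w : R ⟶ R'), F (x ≫ w) = x ≫ F w := by
      intro x w
      exact F.map_smul (op x) w
    have key : ∀ v : R ⟶ ⨁ (fun _ : Fin n => R),
        v ≫ biproduct.desc (fun i => F (biproduct.ι (fun _ : Fin n => R) i ≫ p)) = F (v ≫ p) := by
      intro v
      have hv : v = ∑ i : Fin n, (v ≫ biproduct.π _ i) ≫ biproduct.ι (fun _ : Fin n => R) i := by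
        calc v = v ≫ 𝟙 _ := by rw [Category.comp_id]
          _ = _ := by
            rw [← biproduct.total, Preadditive.comp_sum]
            simp [Category.assoc]
      conv_lhs => rw [hv]
      conv_rhs => rw [hv]
      rw [Preadditive.sum_comp, Preadditive.sum_comp, map_sum]
      refine Finset.sum_congr rfl (fun i _ => ?_)
      conv_rhs => rw [Category.assoc, smulF]
      rw [Category.assoc, biproduct.ι_desc]
    apply LinearMap.ext
    intro u
    show u ≫ (s ≫ biproduct.desc _) = F u
    rw [← Category.assoc, key (u ≫ s), Category.assoc, hsp, Category.comp_id]

end RelRigid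
end

section
/- Let 𝒯 be a Krull–Schmidt, Hom-finite triangulated category over an algebraically closed field k, R a presilting object of 𝒯, and X ∈ pr(R). Then Hom_𝒯(X, X[i]) = 0 for all i > 1. -/
/-!
Formalization of results from "Relative rigid objects in triangulated categories"
by Fu–Geng–Liu.  Throughout, `C` is a Krull–Schmidt, Hom-finite, `k`-linear
triangulated category over an algebraically closed field `k` (Krull–Schmidt is
encoded as: Hom-finite over `k` together with idempotent completeness), with
suspension functor `⟦1⟧`.
-/

open CategoryTheory Limits Pretriangulated Opposite

universe w v u

/-!
For `A ∈ add R` and `n ≥ 1`, the shifted triangle `R₁⟦n⟧ → R₀⟦n⟧ → X⟦n⟧ → R₁⟦n + 1⟧` shows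
`Hom(A, X⟦n⟧) = 0`, since `R` is presilting. Applying `Hom(-, X⟦i⟧)` to `R₁ → R₀ → X → R₁⟦1⟧`
then kills `Hom(X, X⟦i⟧)`: the outer terms are `Hom(R₀, X⟦i⟧)` and
`Hom(R₁⟦1⟧, X⟦i⟧) ≅ Hom(R₁, X⟦i - 1⟧)`, and `i - 1 ≥ 1`.
-/

namespace CategoryTheory

variable {C : Type*} [Category C]

lemma Retract.subsingleton_hom_left {A A' Y : C} (h : Retract A A') [Subsingleton (A' ⟶ Y)] :
    Subsingleton (A ⟶ Y) :=
  Function.Injective.subsingleton (f := fun g => h.r ≫ g) fun _ _ => (cancel_epi h.r).1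

lemma Retract.subsingleton_hom_right {B B' Y : C} (h : Retract B B') [Subsingleton (Y ⟶ B')] :
    Subsingleton (Y ⟶ B) :=
  Function.Injective.subsingleton (f := fun g => g ≫ h.i) fun _ _ => (cancel_mono h.i).1

lemma subsingleton_shift_hom_shift [HasShift C ℤ] {A B : C} {a b c : ℤ} (h : a + b = c)
    (hAB : Subsingleton (A ⟶ B⟦a⟧)) : Subsingleton (A⟦b⟧ ⟶ B⟦c⟧) :=
  have : Subsingleton (A⟦b⟧ ⟶ B⟦a⟧⟦b⟧) := (shiftFunctor C b).map_surjective.subsingleton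
  let e : B⟦c⟧ ≅ B⟦a⟧⟦b⟧ := (shiftFunctorAdd' C a b c h).app B
  e.retract.subsingleton_hom_right

variable [Preadditive C] [HasZeroObject C] [HasShift C ℤ] [∀ n : ℤ, (shiftFunctor C n).Additive]
  [Pretriangulated C]

lemma Pretriangulated.subsingleton_hom_to_obj₃ {T : Triangle C} (hT : T ∈ distTriang C)
    {A : C} (h₂ : Subsingleton (A ⟶ T.obj₂))
    (h₁ : Subsingleton (A ⟶ T.obj₁⟦(1 : ℤ)⟧)) : Subsingleton (A ⟶ T.obj₃) := by
  refine subsingleton_of_forall_eq 0 fun f => ?_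
  obtain ⟨g, rfl⟩ := T.coyoneda_exact₃ hT f (Subsingleton.elim _ _)
  rw [Subsingleton.elim g 0, zero_comp]

lemma Pretriangulated.subsingleton_hom_from_obj₃ {T : Triangle C} (hT : T ∈ distTriang C)
    {Y : C} (h₂ : Subsingleton (T.obj₂ ⟶ Y))
    (h₁ : Subsingleton (T.obj₁⟦(1 : ℤ)⟧ ⟶ Y)) : Subsingleton (T.obj₃ ⟶ Y) := by
  refine subsingleton_of_forall_eq 0 fun f => ?_
  obtain ⟨g, rfl⟩ := T.yoneda_exact₃ hT f (Subsingleton.elim _ _)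
  rw [Subsingleton.elim g 0, comp_zero]

end CategoryTheory

namespace RelRigid

section

variable {C : Type*} [Category C] [Preadditive C] [HasFiniteBiproducts C]

lemma InAdd.subsingleton_hom {R A Y : C} (hA : InAdd R A) [Subsingleton (R ⟶ Y)] :
    Subsingleton (A ⟶ Y) := by
  obtain ⟨n, s, p, hsp⟩ := hA
  have : Subsingleton ((⨁ fun _ : Fin n => R) ⟶ Y) :=
    ⟨fun _ _ => biproduct.hom_ext' _ _ fun _ => Subsingleton.elim _ _⟩
  exact Retract.subsingleton_hom_left ⟨s, p, hsp⟩

lemma InAdd.subsingleton_hom_obj {D : Type*} [Category D] [Preadditive D] [HasFiniteBiproducts D]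
    (F : C ⥤ D) [F.Additive] {R B : C} {Y : D} (hB : InAdd R B) [Subsingleton (Y ⟶ F.obj R)] :
    Subsingleton (Y ⟶ F.obj B) := by
  obtain ⟨n, s, p, hsp⟩ := hB
  have : Subsingleton (Y ⟶ ⨁ F.obj ∘ fun _ : Fin n => R) :=
    ⟨fun _ _ => biproduct.hom_ext _ _ fun _ => Subsingleton.elim (α := Y ⟶ F.obj R) _ _⟩
  exact ((Retract.map ⟨s, p, hsp⟩ F).trans (F.mapBiproduct _).retract).subsingleton_hom_right

variable [HasShift C ℤ] [∀ n : ℤ, (shiftFunctor C n).Additive]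

lemma IsPresilting.subsingleton_hom_shift {R A B : C} (hR : IsPresilting R) (hA : InAdd R A)
    (hB : InAdd R B) {n : ℤ} (hn : 0 < n) : Subsingleton (A ⟶ B⟦n⟧) :=
  have : Subsingleton (R ⟶ R⟦n⟧) := subsingleton_of_forall_eq 0 (hR n hn)
  have : Subsingleton (R ⟶ B⟦n⟧) := hB.subsingleton_hom_obj (shiftFunctor C n)
  hA.subsingleton_hom

lemma InPr.subsingleton_hom_shift [HasZeroObject C] [Pretriangulated C] {R A X : C}
    (hX : InPr R X) (hR : IsPresilting R) (hA : InAdd R A) {n : ℤ} (hn : 0 < n) :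
    Subsingleton (A ⟶ X⟦n⟧) := by
  obtain ⟨R₁, R₀, hR₁, hR₀, _, _, _, hT⟩ := hX
  have : Subsingleton (A ⟶ R₁⟦n + 1⟧) := hR.subsingleton_hom_shift hA hR₁ (by omega)
  exact subsingleton_hom_to_obj₃ (Triangle.shift_distinguished _ hT n)
    (hR.subsingleton_hom_shift hA hR₀ hn)
    ((shiftFunctorAdd' C n 1 (n + 1) rfl).app R₁).symm.retract.subsingleton_hom_right

end

variable {k : Type w} [Field k] [IsAlgClosed k]
variable {C : Type u} [Category.{v} C] [Preadditive C] [CategoryTheory.Linear k C]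
  [HasZeroObject C] [HasShift C ℤ] [∀ n : ℤ, (shiftFunctor C n).Additive]
  [Pretriangulated C] [HasFiniteBiproducts C] [IsIdempotentComplete C]
  [∀ X Y : C, Module.Finite k (X ⟶ Y)]

/-- **Lemma 3.3.**  Let `R` be a presilting object and `X ∈ pr(R)`.  Then
`Hom(X, X[i]) = 0` for all `i > 1`. -/
theorem statement11 (R : C) (hR : IsPresilting R) (X : C) (hX : InPr R X) :
    ∀ i : ℤ, 1 < i → ∀ f : X ⟶ X⟦i⟧, f = 0 := by
  intro i hi f
  obtain ⟨R₁, R₀, hR₁, hR₀, _, _, _, hT⟩ := id hX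
  have : Subsingleton (X ⟶ X⟦i⟧) := subsingleton_hom_from_obj₃ hT
    (hX.subsingleton_hom_shift hR hR₀ (by omega))
    (subsingleton_shift_hom_shift (by omega : i - 1 + 1 = i)
      (hX.subsingleton_hom_shift hR hR₁ (by omega)))
  exact Subsingleton.elim f 0

end RelRigid
end

section
/- Let d be a positive integer, 𝒯 a Krull–Schmidt, Hom-finite, (d+1)-Calabi–Yau triangulated category over an algebraically closed field k, R a d-rigid object of 𝒯, and X ∈ pr(R). Then X is rigid (Hom_𝒯(X, X[1]) = 0) if and only if X is d-rigid (Hom_𝒯(X, X[i]) = 0 for i = 1, …, d). -/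
/-!
Formalization of results from "Relative rigid objects in triangulated categories"
by Fu–Geng–Liu.  Throughout, `C` is a Krull–Schmidt, Hom-finite, `k`-linear
triangulated category over an algebraically closed field `k` (Krull–Schmidt is
encoded as: Hom-finite over `k` together with idempotent completeness), with
suspension functor `⟦1⟧`.
-/

open CategoryTheory Limits Pretriangulated Opposite

universe w v u

namespace RelRigid

variable {k : Type w} [Field k] [IsAlgClosed k]
variable {C : Type u} [Category.{v} C] [Preadditive C] [CategoryTheory.Linear k C]
  [HasZeroObject C] [HasShift C ℤ] [∀ n : ℤ, (shiftFunctor C n).Additive]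
  [Pretriangulated C] [HasFiniteBiproducts C] [IsIdempotentComplete C]
  [∀ X Y : C, Module.Finite k (X ⟶ Y)]

/-!
For `X ∈ pr(R)` the rotated triangle `R₀ → X → R₁[1] → R₀[1]` and the `d`-rigidity of `R` give
`Hom(R, X[j]) = 0` for `1 ≤ j ≤ d - 1`, and then `Hom(X, X[i]) = 0` for `2 ≤ i ≤ d - 1`.
Of the two remaining degrees, `i = 1` is rigidity itself, and
`Hom(X, X[d])` is dual to `Hom(X[d], X[d+1]) ≅ Hom(X, X[1])` by the `(d+1)`-Calabi–Yau property.
-/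

section

omit [IsAlgClosed k] [HasZeroObject C] [∀ n : ℤ, (shiftFunctor C n).Additive] [Pretriangulated C]
  [HasFiniteBiproducts C] [IsIdempotentComplete C] [∀ X Y : C, Module.Finite k (X ⟶ Y)]

omit [HasShift C ℤ] in
lemma InAdd.hom_from_eq_zero [HasFiniteBiproducts C] {A Z W : C} (h : InAdd A Z)
    (hA : ∀ f : A ⟶ W, f = 0) (f : Z ⟶ W) : f = 0 := by
  obtain ⟨n, s, p, hsp⟩ := h
  have hp : p ≫ f = 0 := biproduct.hom_ext' _ _ fun j => by rw [comp_zero]; exact hA _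
  rw [← Category.id_comp f, ← hsp, Category.assoc, hp, comp_zero]

omit [HasShift C ℤ] in
lemma InAdd.hom_to_eq_zero [HasFiniteBiproducts C] {B Z W : C} (h : InAdd B Z)
    (hB : ∀ f : W ⟶ B, f = 0) (f : W ⟶ Z) : f = 0 := by
  obtain ⟨n, s, p, hsp⟩ := h
  have hs : f ≫ s = 0 := biproduct.hom_ext _ _ fun j => by
    rw [zero_comp, Category.assoc]; exact hB _
  rw [← Category.comp_id f, ← hsp, ← Category.assoc, hs, zero_comp]

lemma InAdd.shift_s15 [HasFiniteBiproducts C] [∀ n : ℤ, (shiftFunctor C n).Additive] {R Z : C}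
    (h : InAdd R Z) (m : ℤ) : InAdd (R⟦m⟧) (Z⟦m⟧) := by
  obtain ⟨n, s, p, hsp⟩ := h
  let F := shiftFunctor C m
  let e := F.mapBiproduct (fun _ : Fin n => R)
  refine ⟨n, F.map s ≫ e.hom, e.inv ≫ F.map p, ?_⟩
  rw [Category.assoc, Iso.hom_inv_id_assoc, ← F.map_comp, hsp, F.map_id]

lemma hom_shift_shift_eq_zero {A B : C} {a b c : ℤ} (h : ∀ f : A ⟶ B⟦c⟧, f = 0)
    (habc : a + b = c) (f : A ⟶ B⟦a⟧⟦b⟧) : f = 0 := by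
  rw [← Preadditive.IsIso.comp_right_eq_zero f ((shiftFunctorAdd' C a b c habc).inv.app B)]
  exact h _

lemma shift_hom_shift_eq_zero [∀ n : ℤ, (shiftFunctor C n).Additive] {A B : C} {n a b : ℤ}
    (h : ∀ f : A ⟶ B⟦n⟧, f = 0) (hnab : n + a = b) (f : A⟦a⟧ ⟶ B⟦b⟧) : f = 0 := by
  rw [← Preadditive.IsIso.comp_right_eq_zero f ((shiftFunctorAdd' C n a b hnab).hom.app B)]
  obtain ⟨g, hg⟩ := (shiftFunctor C a).map_surjective (f ≫ _)
  rw [← hg, h g, Functor.map_zero]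

lemma IsCalabiYau.hom_eq_zero_of_dual {n : ℤ} (hCY : IsCalabiYau (k := k) (C := C) n)
    {X Y : C} (h : ∀ g : Y ⟶ X⟦n⟧, g = 0) (f : X ⟶ Y) : f = 0 := by
  obtain ⟨pair, hbij, -⟩ := hCY
  refine (hbij X Y).1 (LinearMap.ext fun g => ?_)
  rw [h g, map_zero, map_zero]

end

section

omit [IsAlgClosed k] [HasFiniteBiproducts C] [IsIdempotentComplete C]
  [∀ X Y : C, Module.Finite k (X ⟶ Y)]

lemma hom_to_obj₂_eq_zero {T : Triangle C} (hT : T ∈ distTriang C) {A : C}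
    (h₁ : ∀ f : A ⟶ T.obj₁, f = 0) (h₃ : ∀ f : A ⟶ T.obj₃, f = 0) (f : A ⟶ T.obj₂) :
    f = 0 := by
  obtain ⟨g, rfl⟩ := Triangle.coyoneda_exact₂ T hT f (h₃ _)
  rw [h₁ g, zero_comp]

lemma hom_from_obj₂_eq_zero {T : Triangle C} (hT : T ∈ distTriang C) {B : C}
    (h₁ : ∀ f : T.obj₁ ⟶ B, f = 0) (h₃ : ∀ f : T.obj₃ ⟶ B, f = 0) (f : T.obj₂ ⟶ B) :
    f = 0 := by
  obtain ⟨g, rfl⟩ := Triangle.yoneda_exact₂ T hT f (h₁ _)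
  rw [h₃ g, comp_zero]

end

section

omit [IsAlgClosed k] [IsIdempotentComplete C] [∀ X Y : C, Module.Finite k (X ⟶ Y)]

lemma InPr.hom_shift_eq_zero {d : ℤ} {R Y : C} (hR : IsDRigid d R) (hY : InPr R Y) {j : ℤ}
    (hj : 1 ≤ j) (hjd : j + 1 ≤ d) (u : R ⟶ Y⟦j⟧) : u = 0 := by
  obtain ⟨R₁, R₀, hR₁, hR₀, _, _, _, hT⟩ := hY
  exact hom_to_obj₂_eq_zero (Triangle.shift_distinguished _ (rot_of_distTriang _ hT) j)
    ((hR₀.shift_s15 j).hom_to_eq_zero (hR j hj (by omega))) (hom_shift_shift_eq_zero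
      ((hR₁.shift_s15 (1 + j)).hom_to_eq_zero (hR (1 + j) (by omega) (by omega))) rfl) u

lemma InPr.hom_inPr_shift_eq_zero {d : ℤ} {R X Y : C} (hR : IsDRigid d R) (hX : InPr R X)
    (hY : InPr R Y) {i : ℤ} (hi : 2 ≤ i) (hid : i + 1 ≤ d) (f : X ⟶ Y⟦i⟧) : f = 0 := by
  obtain ⟨R₁, R₀, hR₁, hR₀, _, _, _, hT⟩ := hX
  exact hom_from_obj₂_eq_zero (rot_of_distTriang _ hT)
    (hR₀.hom_from_eq_zero (hY.hom_shift_eq_zero hR (by omega) hid)) (shift_hom_shift_eq_zero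
      (hR₁.hom_from_eq_zero (hY.hom_shift_eq_zero hR (j := i - 1) (by omega) (by omega)))
      (sub_add_cancel i 1)) f

end

/-- **Lemma 4.1.**  Let `d ≥ 1`, `C` a `(d+1)`-Calabi–Yau triangulated category, `R` a
`d`-rigid object and `X ∈ pr(R)`.  Then `X` is rigid if and only if `X` is `d`-rigid. -/
theorem statement15 (d : ℤ) (hd : 1 ≤ d)
    (hCY : IsCalabiYau (k := k) (C := C) (d + 1))
    (R : C) (hR : IsDRigid d R) (X : C) (hX : InPr R X) :
    IsRigidObj X ↔ IsDRigid d X := by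
  refine ⟨fun hrig i hi hid f => ?_, fun hdrig => hdrig 1 le_rfl hd⟩
  obtain rfl | rfl | ⟨hi2, hid'⟩ : i = 1 ∨ i = d ∨ (2 ≤ i ∧ i + 1 ≤ d) := by omega
  · exact hrig f
  · exact hCY.hom_eq_zero_of_dual (shift_hom_shift_eq_zero hrig (add_comm 1 i)) f
  · exact hX.hom_inPr_shift_eq_zero hR hX hi2 hid' f

end RelRigid
end
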